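/- arXiv:2601.12299 — 5 statements merged into one kernel-verified Lean document; each statement's English description precedes it below -/
import Mathlib

section
/- Let R be a commutative ring and A a commutative R-algebra. Let V and W be integral domains which are valuation rings, each equipped with an R-algebra structure, and let f : A →+* FractionRing V and g : A →+* FractionRing W be ring homomorphisms commuting with the structure maps from R (where the fraction fields carry the R-algebra structures through V and W). Write v_f := (ValuationRing.valuation V (FractionRing V)).comap f and v_g := (ValuationRing.valuation W (FractionRing W)).comap g for the induced valuations on A. Then v_f and v_g are equivalent valuations (Valuation.IsEquiv) if and only if there exist: an integral domain U which is a valuation ring with an R-algebra structure; a ring homomorphism h : A →+* FractionRing U commuting with the structure maps from R; injective local ring homomorphisms α : U →+* V and β : U →+* W commuting with the structure maps from R; and ring homomorphisms α̂ : FractionRing U →+* FractionRing V and β̂ : FractionRing U →+* FractionRing W satisfying α̂ ∘ algebraMap U (FractionRing U) = algebraMap V (FractionRing V) ∘ α and β̂ ∘ algebraMap U (FractionRing U) = algebraMap W (FractionRing W) ∘ β, such that α̂ ∘ h = f and β̂ ∘ h = g. -/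
universe u

/-- The data witnessing that two pairs `(V, f)` and `(W, g)` of valuation rings over `R`
together with `R`-algebra maps from `A` to their fraction fields are equivalent: a common
refinement `(U, h)` dominating both via injective local homomorphisms of valuation rings over
`R`, together with the induced maps on fraction fields. -/
structure CommonRefinement (R A V W : Type u) [CommRing R] [CommRing A] [Algebra R A]
    [CommRing V] [IsDomain V] [ValuationRing V] [Algebra R V]
    [CommRing W] [IsDomain W] [ValuationRing W] [Algebra R W]
    (f : A →+* FractionRing V) (g : A →+* FractionRing W) : Type (u + 1) where
  U : Type u
  [commRingU : CommRing U]
  [isDomainU : IsDomain U]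
  [valuationRingU : ValuationRing U]
  [algebraU : Algebra R U]
  h : A →+* FractionRing U
  h_compat : h.comp (algebraMap R A) =
    (algebraMap U (FractionRing U)).comp (algebraMap R U)
  α : U →+* V
  β : U →+* W
  α_injective : Function.Injective α
  β_injective : Function.Injective β
  α_local : IsLocalHom α
  β_local : IsLocalHom β
  α_compat : α.comp (algebraMap R U) = algebraMap R V
  β_compat : β.comp (algebraMap R U) = algebraMap R W
  αhat : FractionRing U →+* FractionRing V
  βhat : FractionRing U →+* FractionRing W
  αhat_compat : αhat.comp (algebraMap U (FractionRing U)) =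
    (algebraMap V (FractionRing V)).comp α
  βhat_compat : βhat.comp (algebraMap U (FractionRing U)) =
    (algebraMap W (FractionRing W)).comp β
  αhat_h : αhat.comp h = f
  βhat_h : βhat.comp h = g

/-!
A local homomorphism of valuation rings `U → V` identifies the units of `U` with the elements
of `U` that become units in `V`, so the valuation of `V` pulled back to `Frac U` has the same
elements of value one as the valuation of `U`; hence a common refinement forces `v_f ≃ v_g`.
Conversely, equivalent valuations have the same support, so `f` and `g` have the same kernel and
both factor through the fraction field `K` of `A ⧸ ker f`, where the pulled-back valuations are
still equivalent. Their common valuation ring `U ⊆ K` embeds locally into both `V` and `W`.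
-/

open ValuationRing

theorem ValuationRing.integers (V L : Type*) [CommRing V] [IsDomain V] [ValuationRing V]
    [Field L] [Algebra V L] [IsFractionRing V L] : (valuation V L).Integers V where
  hom_inj := IsFractionRing.injective V L
  map_le_one x := (mem_integer_iff V L _).mpr ⟨x, rfl⟩
  exists_of_le_one _ hx := (mem_integer_iff V L _).mp hx

theorem Valuation.IsEquiv.of_comap_of_surjective {A B Γ Γ' : Type*} [Ring A] [Ring B]
    [LinearOrderedCommMonoidWithZero Γ] [LinearOrderedCommMonoidWithZero Γ']
    {v : Valuation B Γ} {w : Valuation B Γ'} {π : A →+* B} (hπ : Function.Surjective π)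
    (h : (v.comap π).IsEquiv (w.comap π)) : v.IsEquiv w := by
  intro x y
  obtain ⟨a, rfl⟩ := hπ x
  obtain ⟨b, rfl⟩ := hπ y
  exact h a b

theorem Valuation.IsEquiv.of_comap_algebraMap {B K Γ Γ' : Type*} [CommRing B] [Field K]
    [Algebra B K] [IsFractionRing B K]
    [LinearOrderedCommGroupWithZero Γ] [LinearOrderedCommGroupWithZero Γ']
    {v : Valuation K Γ} {w : Valuation K Γ'}
    (h : (v.comap (algebraMap B K)).IsEquiv (w.comap (algebraMap B K))) : v.IsEquiv w := by
  refine Valuation.isEquiv_of_val_le_one fun x => ?_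
  obtain ⟨a, b, hb, rfl⟩ := IsFractionRing.div_surjective (A := B) x
  have hb' : algebraMap B K b ≠ 0 := (IsLocalization.map_units K ⟨b, hb⟩).ne_zero
  rw [map_div₀, map_div₀, div_le_one₀ (v.pos_iff.mpr hb'), div_le_one₀ (w.pos_iff.mpr hb')]
  exact h a b

theorem isEquiv_comap_valuation_of_isLocalHom {U K V L : Type*}
    [CommRing U] [IsDomain U] [ValuationRing U] [Field K] [Algebra U K] [IsFractionRing U K]
    [CommRing V] [IsDomain V] [ValuationRing V] [Field L] [Algebra V L] [IsFractionRing V L]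
    (α : U →+* V) [IsLocalHom α] (αhat : K →+* L)
    (hα : ∀ s, αhat (algebraMap U K s) = algebraMap V L (α s)) :
    ((valuation V L).comap αhat).IsEquiv (valuation U K) := by
  have h_eq_one : ∀ s, valuation V L (αhat (algebraMap U K s)) = 1 ↔
      valuation U K (algebraMap U K s) = 1 := fun s => by
    rw [hα, ← (integers V L).isUnit_iff_valuation_eq_one,
      ← (integers U K).isUnit_iff_valuation_eq_one, isUnit_map_iff]
  refine Valuation.isEquiv_iff_val_eq_one.mpr fun {x} => ?_
  rw [Valuation.comap_apply]
  obtain ⟨s, rfl | hs⟩ := (integers U K).eq_algebraMap_or_inv_eq_algebraMap x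
  · exact h_eq_one s
  · rw [← inv_eq_one, ← map_inv₀, ← map_inv₀, hs, h_eq_one, ← hs, map_inv₀,
      inv_eq_one]

theorem ValuationSubring.exists_isLocalHom_of_isEquiv_comap {K V L : Type*} [Field K]
    [CommRing V] [IsDomain V] [ValuationRing V] [Field L] [Algebra V L] [IsFractionRing V L]
    (O : ValuationSubring K) (φ : K →+* L)
    (hO : ((ValuationRing.valuation V L).comap φ).IsEquiv O.valuation) :
    ∃ α : O →+* V, Function.Injective α ∧ IsLocalHom α ∧
      ∀ x : O, algebraMap V L (α x) = φ x := by
  have hφO : ∀ x ∈ O.toSubring, φ x ∈ (ValuationRing.valuation V L).integer := fun x hx =>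
    hO.le_one_iff_le_one.mpr ((O.valuation_le_one_iff x).mpr hx)
  let α : O →+* V := (equivInteger V L).symm.toRingHom.comp (φ.restrict O.toSubring _ hφO)
  have hα : ∀ x : O, algebraMap V L (α x) = φ x := fun x =>
    congrArg Subtype.val ((equivInteger V L).apply_symm_apply _)
  refine ⟨α, fun x y hxy => Subtype.ext (φ.injective ?_), ⟨fun x hx => ?_⟩, hα⟩
  · rw [← hα, ← hα, hxy]
  · rw [(ValuationRing.integers V L).isUnit_iff_valuation_eq_one, hα, ← Valuation.comap_apply,
      hO.eq_one_iff_eq_one] at hx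
    exact (O.valuation_eq_one_iff x).mpr hx

theorem CommonRefinement.isEquiv {R A V W : Type u} [CommRing R] [CommRing A] [Algebra R A]
    [CommRing V] [IsDomain V] [ValuationRing V] [Algebra R V]
    [CommRing W] [IsDomain W] [ValuationRing W] [Algebra R W]
    {f : A →+* FractionRing V} {g : A →+* FractionRing W} (c : CommonRefinement R A V W f g) :
    ((valuation V (FractionRing V)).comap f).IsEquiv
      ((valuation W (FractionRing W)).comap g) := by
  obtain ⟨U, h, -, α, β, -, -, _, _, -, -, αhat, βhat, hαhat, hβhat, rfl, rfl⟩ := c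
  have hα := isEquiv_comap_valuation_of_isLocalHom α αhat (RingHom.congr_fun hαhat)
  have hβ := isEquiv_comap_valuation_of_isLocalHom β βhat (RingHom.congr_fun hβhat)
  rw [Valuation.comap_comp, Valuation.comap_comp]
  exact (hα.comap h).trans (hβ.comap h).symm

theorem nonempty_commonRefinement_of_factorization {R A V W K : Type u} [CommRing R] [CommRing A]
    [Algebra R A] [CommRing V] [IsDomain V] [ValuationRing V] [Algebra R V]
    [CommRing W] [IsDomain W] [ValuationRing W] [Algebra R W] [Field K]
    {f : A →+* FractionRing V} {g : A →+* FractionRing W}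
    (hf : f.comp (algebraMap R A) = (algebraMap V (FractionRing V)).comp (algebraMap R V))
    (hg : g.comp (algebraMap R A) = (algebraMap W (FractionRing W)).comp (algebraMap R W))
    (h : A →+* K) (φ : K →+* FractionRing V) (ψ : K →+* FractionRing W)
    (hφ : φ.comp h = f) (hψ : ψ.comp h = g)
    (hφψ : ((valuation V (FractionRing V)).comap φ).IsEquiv
      ((valuation W (FractionRing W)).comap ψ)) :
    Nonempty (CommonRefinement R A V W f g) := by
  set O := ((valuation V (FractionRing V)).comap φ).valuationSubring
  obtain ⟨α, hα_inj, hα_local, hα⟩ :=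
    O.exists_isLocalHom_of_isEquiv_comap φ (Valuation.isEquiv_valuation_valuationSubring _)
  obtain ⟨β, hβ_inj, hβ_local, hβ⟩ := O.exists_isLocalHom_of_isEquiv_comap ψ
    (hφψ.symm.trans (Valuation.isEquiv_valuation_valuationSubring _))
  have hφR : ∀ r, φ (h (algebraMap R A r)) = algebraMap V _ (algebraMap R V r) := fun r => by
    rw [← RingHom.comp_apply φ, hφ, ← RingHom.comp_apply, hf, RingHom.comp_apply]
  have hψR : ∀ r, ψ (h (algebraMap R A r)) = algebraMap W _ (algebraMap R W r) := fun r => by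
    rw [← RingHom.comp_apply ψ, hψ, ← RingHom.comp_apply, hg, RingHom.comp_apply]
  have hR : ∀ r, h (algebraMap R A r) ∈ O := fun r => by
    rw [Valuation.mem_valuationSubring_iff, Valuation.comap_apply, hφR]
    exact (integers V _).map_le_one _
  let _ : Algebra R O := ((h.comp (algebraMap R A)).codRestrict O hR).toAlgebra
  let e := FractionRing.algEquiv O K
  have he : ∀ x : O, e (algebraMap O (FractionRing O) x) = x := e.commutes
  exact ⟨{
    U := O
    h := e.symm.toRingHom.comp h
    h_compat := RingHom.ext fun r =>
      e.injective ((e.apply_symm_apply _).trans (he (algebraMap R O r)).symm)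
    α := α
    β := β
    α_injective := hα_inj
    β_injective := hβ_inj
    α_local := hα_local
    β_local := hβ_local
    α_compat := RingHom.ext fun r => IsFractionRing.injective V _ ((hα _).trans (hφR r))
    β_compat := RingHom.ext fun r => IsFractionRing.injective W _ ((hβ _).trans (hψR r))
    αhat := φ.comp e.toRingHom
    βhat := ψ.comp e.toRingHom
    αhat_compat := RingHom.ext fun x => by simp [he, hα]
    βhat_compat := RingHom.ext fun x => by simp [he, hβ]
    αhat_h := by ext; simp [← hφ]
    βhat_h := by ext; simp [← hψ] }⟩

theorem nonempty_commonRefinement_of_isEquiv {R A V W : Type u} [CommRing R] [CommRing A]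
    [Algebra R A] [CommRing V] [IsDomain V] [ValuationRing V] [Algebra R V]
    [CommRing W] [IsDomain W] [ValuationRing W] [Algebra R W]
    {f : A →+* FractionRing V} {g : A →+* FractionRing W}
    (hf : f.comp (algebraMap R A) = (algebraMap V (FractionRing V)).comp (algebraMap R V))
    (hg : g.comp (algebraMap R A) = (algebraMap W (FractionRing W)).comp (algebraMap R W))
    (hfg : ((valuation V (FractionRing V)).comap f).IsEquiv
      ((valuation W (FractionRing W)).comap g)) :
    Nonempty (CommonRefinement R A V W f g) := by
  have hker : RingHom.ker f = RingHom.ker g := Ideal.ext fun a => by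
    simpa only [RingHom.mem_ker, Valuation.comap_apply, Valuation.zero_iff] using hfg.eq_zero
  have := RingHom.ker_isPrime f
  let K := FractionRing (A ⧸ RingHom.ker f)
  let h : A →+* K := (algebraMap _ K).comp (Ideal.Quotient.mk (RingHom.ker f))
  let φ : K →+* FractionRing V := IsFractionRing.lift (RingHom.kerLift_injective f)
  let ψ : K →+* FractionRing W :=
    IsFractionRing.lift (g := (RingHom.kerLift g).comp (Ideal.quotEquivOfEq hker).toRingHom)
      ((RingHom.kerLift_injective g).comp (Ideal.quotEquivOfEq hker).injective)
  have hφ : φ.comp h = f := by ext; simp [φ, h]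
  have hψ : ψ.comp h = g := by ext; simp [ψ, h]
  refine nonempty_commonRefinement_of_factorization hf hg h φ ψ hφ hψ ?_
  refine .of_comap_algebraMap
    (.of_comap_of_surjective (Ideal.Quotient.mk_surjective (I := RingHom.ker f)) ?_)
  rw [← hφ, ← hψ] at hfg
  exact hfg

/-- Two pairs `(V, f)` and `(W, g)` of valuation rings over `R` with `R`-algebra homomorphisms
`f : A →+* Frac V`, `g : A →+* Frac W` induce equivalent valuations on `A` if and only if they
admit a common refinement by a valuation ring `U` over `R` mapping to both `V` and `W` by
injective local homomorphisms. -/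
theorem valuation_comap_isEquiv_iff_nonempty_commonRefinement
    {R A V W : Type u} [CommRing R] [CommRing A] [Algebra R A]
    [CommRing V] [IsDomain V] [ValuationRing V] [Algebra R V]
    [CommRing W] [IsDomain W] [ValuationRing W] [Algebra R W]
    (f : A →+* FractionRing V) (g : A →+* FractionRing W)
    (hf : f.comp (algebraMap R A) = (algebraMap V (FractionRing V)).comp (algebraMap R V))
    (hg : g.comp (algebraMap R A) = (algebraMap W (FractionRing W)).comp (algebraMap R W)) :
    ((ValuationRing.valuation V (FractionRing V)).comap f).IsEquiv
      ((ValuationRing.valuation W (FractionRing W)).comap g) ↔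
    Nonempty (CommonRefinement R A V W f g) :=
  ⟨nonempty_commonRefinement_of_isEquiv hf hg, fun ⟨c⟩ => c.isEquiv⟩
end

section
/- Let R be a commutative ring, A a commutative R-algebra, Γ a linearly ordered commutative group with zero, and v : Valuation A Γ a valuation such that v (algebraMap R A r) ≤ 1 for every r : R. Let p := Valuation.supp v (a prime ideal of A), and let q : A →+* FractionRing (A ⧸ p) be the composite of the quotient map A → A ⧸ p with the embedding of the domain A ⧸ p into its fraction field. Then there exists a valuation subring 𝒪 of FractionRing (A ⧸ p) such that q (algebraMap R A r) ∈ 𝒪 for every r : R, and the valuation 𝒪.valuation pulled back along q (Valuation.comap) is equivalent (Valuation.IsEquiv) to v. -/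
/-!
A valuation `v` on `A` factors through the domain `A ⧸ supp v`, where its support is trivial, so it
extends to a valuation `w` on the fraction field `K` with `w ∘ q = v`. The valuation subring
`{x | w x ≤ 1}` of `K` then contains `q R` because `v ≤ 1` on `R`, and its canonical valuation is
equivalent to `w`, hence its pullback along `q` is equivalent to `v`.
-/

namespace Valuation

variable {A : Type*} [CommRing A]

theorem nonZeroDivisors_le_primeCompl_supp {Γ₀ : Type*} [LinearOrderedCommMonoidWithZero Γ₀]
    [Nontrivial Γ₀] [NoZeroDivisors Γ₀] (v : Valuation A Γ₀) (hv : v.supp = ⊥) :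
    nonZeroDivisors A ≤ v.supp.primeCompl := by
  intro x hx (hx_supp : x ∈ v.supp)
  rw [hv, Ideal.mem_bot] at hx_supp
  subst hx_supp
  have h10 : (1 : A) = 0 := hx.1 1 (zero_mul 1)
  simpa [h10] using v.map_one

variable {Γ : Type*} [LinearOrderedCommGroupWithZero Γ]

noncomputable def onFractionRingQuotSupp (v : Valuation A Γ) :
    Valuation (FractionRing (A ⧸ v.supp)) Γ :=
  (v.onQuot le_rfl).extendToLocalization
    ((v.onQuot le_rfl).nonZeroDivisors_le_primeCompl_supp v.supp_quot_supp) _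

theorem comap_onFractionRingQuotSupp (v : Valuation A Γ) :
    v.onFractionRingQuotSupp.comap
      ((algebraMap (A ⧸ v.supp) (FractionRing (A ⧸ v.supp))).comp (Ideal.Quotient.mk v.supp)) =
      v := by
  ext a
  rw [comap_apply, RingHom.comp_apply]
  exact extendToLocalization_apply_map_apply _ _ _ _

end Valuation

/-- Every valuation `v` on a commutative `R`-algebra `A` which is bounded by `1` on (the image
of) `R` arises, up to equivalence, from a valuation subring of the fraction field of
`A ⧸ supp v` containing the image of `R`. -/
theorem exists_valuationSubring_comap_isEquiv
    {R A : Type*} [CommRing R] [CommRing A] [Algebra R A]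
    {Γ : Type*} [LinearOrderedCommGroupWithZero Γ]
    (v : Valuation A Γ) (hv : ∀ r : R, v (algebraMap R A r) ≤ 1) :
    ∃ 𝒪 : ValuationSubring (FractionRing (A ⧸ v.supp)),
      (∀ r : R,
        ((algebraMap (A ⧸ v.supp) (FractionRing (A ⧸ v.supp))).comp
          (Ideal.Quotient.mk v.supp)) (algebraMap R A r) ∈ 𝒪) ∧
      (𝒪.valuation.comap
        ((algebraMap (A ⧸ v.supp) (FractionRing (A ⧸ v.supp))).comp
          (Ideal.Quotient.mk v.supp))).IsEquiv v := by
  set q := (algebraMap (A ⧸ v.supp) (FractionRing (A ⧸ v.supp))).comp (Ideal.Quotient.mk v.supp)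
  set w := v.onFractionRingQuotSupp
  have hwq : w.comap q = v := v.comap_onFractionRingQuotSupp
  refine ⟨w.valuationSubring, fun r => ?_, ?_⟩
  · rw [Valuation.mem_valuationSubring_iff, ← Valuation.comap_apply, hwq]
    exact hv r
  · exact (w.isEquiv_valuation_valuationSubring.symm.comap q).trans (.of_eq hwq)
end

section
/- Let V and W be integral domains which are valuation rings, and let π : V →+* W be an injective local ring homomorphism. Let ĝ : FractionRing V →+* FractionRing W be a ring homomorphism satisfying ĝ ∘ algebraMap V (FractionRing V) = algebraMap W (FractionRing W) ∘ π. Then the pullback along ĝ of the canonical valuation of W on FractionRing W is equivalent (Valuation.IsEquiv) to the canonical valuation of V on FractionRing V. Consequently, for every commutative ring A and every ring homomorphism f : A →+* FractionRing V, the valuations (ValuationRing.valuation V (FractionRing V)).comap f and (ValuationRing.valuation W (FractionRing W)).comap (ĝ.comp f) on A are equivalent. -/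
universe u

/-!
If `g x ∈ W` but `x ∉ V`, then `x⁻¹ = v` for some `v ∈ V` because `V` is a valuation ring,
and `g x * π v = g (x * x⁻¹) = 1` in `W`, so `π v` is a unit. Locality of `π` makes `v` a unit,
whence `x = v⁻¹ ∈ V` after all. Thus `g⁻¹ W = V`, i.e. the two valuations on `Frac V` have the
same ring of integers, which characterises equivalence.
-/

namespace ValuationRing

variable {V W K L : Type*} [CommRing V] [IsDomain V] [ValuationRing V]
  [Field K] [Algebra V K] [IsFractionRing V K] [CommRing W]

theorem isInteger_of_isInteger_map [CommRing L] [Algebra W L] (π : V →+* W) [IsLocalHom π]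
    (g : K →+* L) (hg : g.comp (algebraMap V K) = (algebraMap W L).comp π)
    (hW : Function.Injective (algebraMap W L)) {x : K}
    (hx : IsLocalization.IsInteger W (g x)) : IsLocalization.IsInteger V x := by
  rcases eq_or_ne x 0 with rfl | hx0
  · exact ⟨0, map_zero _⟩
  obtain hxV | ⟨v, hv⟩ := isInteger_or_isInteger V x
  · exact hxV
  obtain ⟨w, hw⟩ := hx
  have hπv : IsUnit (π v) := by
    refine IsUnit.of_mul_eq_one_right w (hW ?_)
    rw [map_mul, map_one, hw, ← RingHom.comp_apply, ← hg, RingHom.comp_apply, hv, ← map_mul,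
      mul_inv_cancel₀ hx0, map_one]
  obtain ⟨u, rfl⟩ := isUnit_of_map_unit π v hπv
  refine ⟨↑u⁻¹, ?_⟩
  rw [← inv_inv x, ← hv, map_units_inv]

theorem comap_valuation_isEquiv [IsDomain W] [ValuationRing W] [Field L] [Algebra W L]
    [IsFractionRing W L] (π : V →+* W) [IsLocalHom π] (g : K →+* L)
    (hg : g.comp (algebraMap V K) = (algebraMap W L).comp π) :
    ((valuation W L).comap g).IsEquiv (valuation V K) := by
  refine Valuation.isEquiv_of_val_le_one fun x => ?_
  rw [Valuation.comap_apply, ← Valuation.mem_integer_iff, ← Valuation.mem_integer_iff,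
    mem_integer_iff, mem_integer_iff]
  refine ⟨isInteger_of_isInteger_map π g hg (IsFractionRing.injective W L), ?_⟩
  rintro ⟨v, rfl⟩
  exact ⟨π v, (RingHom.congr_fun hg v).symm⟩

end ValuationRing

theorem valuation_comap_isEquiv_of_injective_isLocalHom_general
    {V W : Type*} [CommRing V] [IsDomain V] [ValuationRing V]
    [CommRing W] [IsDomain W] [ValuationRing W]
    (π : V →+* W) (hπloc : IsLocalHom π)
    (ghat : FractionRing V →+* FractionRing W)
    (hghat : ghat.comp (algebraMap V (FractionRing V)) =
      (algebraMap W (FractionRing W)).comp π) :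
    ((ValuationRing.valuation W (FractionRing W)).comap ghat).IsEquiv
      (ValuationRing.valuation V (FractionRing V)) ∧
    ∀ (A : Type u) [CommRing A] (f : A →+* FractionRing V),
      ((ValuationRing.valuation V (FractionRing V)).comap f).IsEquiv
        ((ValuationRing.valuation W (FractionRing W)).comap (ghat.comp f)) := by
  have key := ValuationRing.comap_valuation_isEquiv π ghat hghat
  refine ⟨key, fun A _ f => ?_⟩
  rw [Valuation.comap_comp]
  exact (key.comap f).symm

/-- If `π : V →+* W` is an injective local homomorphism of valuation rings and
`ĝ : Frac V →+* Frac W` is compatible with `π`, then the pullback along `ĝ` of the canonical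
valuation of `W` is equivalent to the canonical valuation of `V`; consequently, for any
commutative ring `A` and any `f : A →+* Frac V`, the valuations obtained on `A` via `f` and via
`ĝ ∘ f` are equivalent. -/
theorem valuation_comap_isEquiv_of_injective_isLocalHom
    {V W : Type*} [CommRing V] [IsDomain V] [ValuationRing V]
    [CommRing W] [IsDomain W] [ValuationRing W]
    (π : V →+* W) (hπinj : Function.Injective π) (hπloc : IsLocalHom π)
    (ghat : FractionRing V →+* FractionRing W)
    (hghat : ghat.comp (algebraMap V (FractionRing V)) =
      (algebraMap W (FractionRing W)).comp π) :
    ((ValuationRing.valuation W (FractionRing W)).comap ghat).IsEquiv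
      (ValuationRing.valuation V (FractionRing V)) ∧
    ∀ (A : Type u) [CommRing A] (f : A →+* FractionRing V),
      ((ValuationRing.valuation V (FractionRing V)).comap f).IsEquiv
        ((ValuationRing.valuation W (FractionRing W)).comap (ghat.comp f)) :=
  valuation_comap_isEquiv_of_injective_isLocalHom_general π hπloc ghat hghat
end

section
/- Let V and W be integral domains which are valuation rings, and let f : V →+* W be a ring homomorphism; regard W as a V-algebra (hence a V-module) via f. Then W is faithfully flat over V (Module.FaithfullyFlat V W) if and only if f is injective and local (Function.Injective f and IsLocalHom f). -/
/-! Over a valuation ring, as over any Bézout domain, flatness is torsion-freeness, which for an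
algebra over a domain means that the structure map is injective; a flat local homomorphism of
local rings is faithfully flat. Conversely, a faithfully flat algebra is faithful and induces a
surjection on spectra, so its structure map is injective and local. -/

theorem Module.Flat.of_isTorsionFree_of_isBezout {R M : Type*} [CommRing R] [IsDomain R]
    [IsBezout R] [AddCommGroup M] [Module R M] [Module.IsTorsionFree R M] : Module.Flat R M :=
  Module.Flat.flat_iff_torsion_eq_bot_of_isBezout.mpr
    (Submodule.isTorsionFree_iff_torsion_eq_bot.mp ‹_›)

theorem Module.FaithfullyFlat.of_injective_of_isLocalHom {V W : Type*} [CommRing V] [IsDomain V]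
    [ValuationRing V] [CommRing W] [IsDomain W] [IsLocalRing W] [Algebra V W]
    (hinj : Function.Injective (algebraMap V W)) [IsLocalHom (algebraMap V W)] :
    Module.FaithfullyFlat V W :=
  have : Module.IsTorsionFree V W := Module.isTorsionFree_iff_algebraMap_injective.mpr hinj
  have : Module.Flat V W := Module.Flat.of_isTorsionFree_of_isBezout
  Module.FaithfullyFlat.of_flat_of_isLocalHom

/-- A ring homomorphism between valuation rings is faithfully flat (for the module structure it
induces) if and only if it is injective and local. -/
theorem faithfullyFlat_iff_injective_and_isLocalHom
    {V W : Type*} [CommRing V] [IsDomain V] [ValuationRing V]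
    [CommRing W] [IsDomain W] [ValuationRing W] (f : V →+* W) :
    letI : Algebra V W := f.toAlgebra
    (Module.FaithfullyFlat V W ↔ (Function.Injective f ∧ IsLocalHom f)) := by
  let : Algebra V W := f.toAlgebra
  constructor
  · intro _
    exact ⟨FaithfulSMul.algebraMap_injective V W, Module.FaithfullyFlat.isLocalHom V W⟩
  · rintro ⟨hinj, _⟩
    exact Module.FaithfullyFlat.of_injective_of_isLocalHom hinj
end

section
/- Let A be a commutative ring and p a prime ideal of A. Set K := FractionRing (A ⧸ p) and let q : A →+* K be the composite of the quotient map A → A ⧸ p with the embedding of the domain A ⧸ p into its fraction field. Let v : Valuation K Γ₁ and w : Valuation K Γ₂ be valuations on the field K (with values in linearly ordered commutative groups with zero Γ₁, Γ₂). If the pullbacks v.comap q and w.comap q are equivalent valuations on A (Valuation.IsEquiv), then v and w are equivalent valuations on K. -/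
theorem Valuation.isEquiv_of_comap_isEquiv_of_forall_eq_div {R K Γ₁ Γ₂ : Type*} [Ring R]
    [DivisionRing K] [LinearOrderedCommGroupWithZero Γ₁] [LinearOrderedCommGroupWithZero Γ₂]
    {v : Valuation K Γ₁} {w : Valuation K Γ₂} (f : R →+* K)
    (hf : ∀ x : K, ∃ a b : R, f b ≠ 0 ∧ f a / f b = x)
    (h : (v.comap f).IsEquiv (w.comap f)) : v.IsEquiv w := by
  refine Valuation.isEquiv_of_val_le_one fun x => ?_
  obtain ⟨a, b, hb, rfl⟩ := hf x
  rw [map_div₀, map_div₀, div_le_one₀ (v.pos_iff.2 hb), div_le_one₀ (w.pos_iff.2 hb)]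
  exact h a b

theorem IsFractionRing.exists_comp_div_eq_of_surjective {A B K : Type*} [CommRing A]
    [CommRing B] [Nontrivial B] [Field K] [Algebra B K] [IsFractionRing B K] {g : A →+* B}
    (hg : Function.Surjective g) (z : K) :
    ∃ a b : A, (algebraMap B K).comp g b ≠ 0 ∧
      (algebraMap B K).comp g a / (algebraMap B K).comp g b = z := by
  obtain ⟨x, y, hy, rfl⟩ := IsFractionRing.div_surjective B z
  obtain ⟨a, rfl⟩ := hg x
  obtain ⟨b, rfl⟩ := hg y
  exact ⟨a, b, IsFractionRing.to_map_ne_zero_of_mem_nonZeroDivisors hy, rfl⟩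

/-- A valuation on `K = Frac(A ⧸ p)` is determined up to equivalence by its pullback to `A`:
if the pullbacks of two valuations along `q : A → Frac(A ⧸ p)` are equivalent, then the
valuations themselves are equivalent. -/
theorem valuation_isEquiv_of_comap_isEquiv
    {A : Type*} [CommRing A] (p : Ideal A) [p.IsPrime]
    {Γ₁ Γ₂ : Type*} [LinearOrderedCommGroupWithZero Γ₁] [LinearOrderedCommGroupWithZero Γ₂]
    (v : Valuation (FractionRing (A ⧸ p)) Γ₁) (w : Valuation (FractionRing (A ⧸ p)) Γ₂)
    (h : (v.comap ((algebraMap (A ⧸ p) (FractionRing (A ⧸ p))).comp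
        (Ideal.Quotient.mk p))).IsEquiv
      (w.comap ((algebraMap (A ⧸ p) (FractionRing (A ⧸ p))).comp (Ideal.Quotient.mk p)))) :
    v.IsEquiv w :=
  Valuation.isEquiv_of_comap_isEquiv_of_forall_eq_div _
    (IsFractionRing.exists_comp_div_eq_of_surjective Ideal.Quotient.mk_surjective) h
end
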